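/- arXiv:cs/0609035 — 4 statements merged into one kernel-verified Lean document; each statement's English description precedes it below -/
import Mathlib

section
/- If a player changes the distribution of its choice of c_i (to Bernoulli(β) instead of Bernoulli(α)), while the other two players choose independent Bernoulli(α) bits, the conditional probability that c_{i⁺} = c_{i⁻} = 1 given that c_i = 1 and c1 ⊕ c2 ⊕ c3 = 1 is still α²/(α²+(1-α)²), unchanged by β. -/
/-- Bernoulli weight: probability that a bit equals `b` when P(bit = 1) = α. -/
def bw (α : ℝ) (b : Bool) : ℝ := if b then α else 1 - α

/-- If a deviating player i chooses its bit c_i with distribution Bernoulli(β)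
while the other two players use independent Bernoulli(α) bits, the conditional
probability that c_{i⁺} = c_{i⁻} = 1 given c_i = 1 and c1 ⊕ c2 ⊕ c3 = 1 is
still α²/(α²+(1-α)²), unchanged by β. -/
theorem stmt7 (α β : ℝ) (hα0 : 0 < α) (hα1 : α < 1) (hβ0 : 0 < β) (hβ1 : β < 1) :
    (∑ c1 : Bool, ∑ c2 : Bool, ∑ c3 : Bool,
      (if c2 = true ∧ c3 = true ∧ c1 = true ∧ xor c1 (xor c2 c3) = true then
        bw β c1 * bw α c2 * bw α c3 else 0)) /
    (∑ c1 : Bool, ∑ c2 : Bool, ∑ c3 : Bool,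
      (if c1 = true ∧ xor c1 (xor c2 c3) = true then
        bw β c1 * bw α c2 * bw α c3 else 0))
      = α ^ 2 / (α ^ 2 + (1 - α) ^ 2) := by
  have hd : α ^ 2 + (1 - α) ^ 2 ≠ 0 := by nlinarith
  simp only [Fintype.sum_bool, bw]
  norm_num
  rw [show β * α * α + β * (1-α) * (1-α) = β * (α^2 + (1-α)^2) by ring,
    show β * α * α = β * α^2 by ring, mul_div_mul_left _ _ (ne_of_gt hβ0)]
end

section
/- In an m-out-of-n Shamir secret-sharing scheme over a finite field F with the dealer's polynomial chosen uniformly at random among degree-< m polynomials with f(0) = s, any set of at most m−1 shares is statistically independent of the secret s: for every secret s and every tuple of m−1 share values at fixed distinct nonzero points, the number of consistent polynomials is the same. -/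
lemma shamir_aux (F : Type*) [Field F] [DecidableEq F] (m : ℕ) (hm : 0 < m)
    (S : Finset F) (hS : S.card = m - 1) (h0 : (0 : F) ∉ S)
    (s : F) (y : F → F) :
    {f : Polynomial F |
        f.degree < (m : ℕ) ∧ f.eval 0 = s ∧ ∀ x ∈ S, f.eval x = y x}
      = {Lagrange.interpolate (insert 0 S) id (fun x => if x = 0 then s else y x)} := by
  have hcard : (insert (0:F) S).card = m := by
    rw [Finset.card_insert_of_notMem h0, hS]
    omega
  have hinj : Set.InjOn (id : F → F) ((insert (0:F) S : Finset F) : Set F) := Function.injective_id.injOn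
  ext f
  rw [Set.mem_singleton_iff, ← Lagrange.eq_interpolate_iff (r := fun x => if x = 0 then s else y x) hinj, hcard]
  simp only [Set.mem_setOf_eq, id]
  constructor
  · rintro ⟨hd, h0f, hSf⟩
    refine ⟨hd, fun i hi => ?_⟩
    rcases Finset.mem_insert.mp hi with rfl | hi
    · simpa using h0f
    · rw [if_neg (by rintro rfl; exact h0 hi)]; exact hSf i hi
  · rintro ⟨hd, h⟩
    refine ⟨hd, by simpa using h 0 (Finset.mem_insert_self _ _), fun x hx => ?_⟩
    have := h x (Finset.mem_insert_of_mem hx)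
    rwa [if_neg (by rintro rfl; exact h0 hx)] at this

/-- Perfect secrecy of Shamir secret sharing: with the dealer's polynomial
uniform among degree-< m polynomials with f(0) = s, any m−1 shares are
independent of the secret: for every pair of secrets s, s' and every pair of
tuples of share values at fixed distinct nonzero points, the number of
consistent polynomials is the same. -/
theorem stmt10 (F : Type*) [Field F] [Fintype F] (n m : ℕ) (hm : 0 < m)
    (hmn : m ≤ n) (hn : n < Fintype.card F)
    (S : Finset F) (hS : S.card = m - 1) (h0 : (0 : F) ∉ S)
    (s s' : F) (y y' : F → F) :
    Set.ncard {f : Polynomial F |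
        f.degree < (m : ℕ) ∧ f.eval 0 = s ∧ ∀ x ∈ S, f.eval x = y x}
      = Set.ncard {f : Polynomial F |
        f.degree < (m : ℕ) ∧ f.eval 0 = s' ∧ ∀ x ∈ S, f.eval x = y' x} := by
  classical
  rw [shamir_aux F m hm S hS h0 s y, shamir_aux F m hm S hS h0 s' y',
    Set.ncard_singleton, Set.ncard_singleton]
end

section
/- In a two-player simultaneous one-shot game where each player either sends or withholds its share of a 2-out-of-2 secret, with utilities satisfying: sole-learner > both-learn > neither-learns > only-other-learns, the strategy 'withhold' weakly dominates 'send' for each player; consequently (withhold, withhold) is the unique strategy profile surviving iterated deletion of weakly dominated strategies, and no player learns the secret. -/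
/-- Payoff in the 2-out-of-2 secret sharing game: a player learns the secret
iff the other player sends (`true` = send, `false` = withhold). -/
def payoff (uSole uBoth uNone uOther : ℝ) (mine other : Bool) : ℝ :=
  if other then (if mine then uBoth else uSole)
  else (if mine then uOther else uNone)

/-- In the two-player simultaneous send/withhold game for a 2-out-of-2 secret,
with utilities sole-learner > both-learn > neither-learns > only-other-learns,
'withhold' weakly dominates 'send' for each player; the unique strategy
surviving deletion of weakly dominated strategies for each player is
'withhold', and in the profile (withhold, withhold) no player learns the
secret (each gets the 'neither learns' utility). -/
theorem stmt13 (uSole uBoth uNone uOther : Fin 2 → ℝ)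
    (h1 : ∀ i, uBoth i < uSole i) (h2 : ∀ i, uNone i < uBoth i)
    (h3 : ∀ i, uOther i < uNone i) :
    -- withhold (false) weakly dominates send (true)
    (∀ i : Fin 2,
      (∀ b : Bool, payoff (uSole i) (uBoth i) (uNone i) (uOther i) true b
          ≤ payoff (uSole i) (uBoth i) (uNone i) (uOther i) false b) ∧
      (∃ b : Bool, payoff (uSole i) (uBoth i) (uNone i) (uOther i) true b
          < payoff (uSole i) (uBoth i) (uNone i) (uOther i) false b)) ∧
    -- withhold is the unique strategy surviving deletion of weakly
    -- dominated strategies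
    (∀ i : Fin 2,
      {a : Bool | ¬ ∃ a' : Bool,
        (∀ b : Bool, payoff (uSole i) (uBoth i) (uNone i) (uOther i) a b
            ≤ payoff (uSole i) (uBoth i) (uNone i) (uOther i) a' b) ∧
        (∃ b : Bool, payoff (uSole i) (uBoth i) (uNone i) (uOther i) a b
            < payoff (uSole i) (uBoth i) (uNone i) (uOther i) a' b)}
      = {false}) ∧
    -- in (withhold, withhold) no player learns the secret
    (∀ i : Fin 2,
      payoff (uSole i) (uBoth i) (uNone i) (uOther i) false false
        = uNone i) := by
  refine ⟨fun i => ⟨fun b => ?_, ⟨true, ?_⟩⟩, fun i => ?_, fun i => rfl⟩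
  · cases b <;> simp [payoff] <;> [exact (h3 i).le; exact (h1 i).le]
  · simpa [payoff] using h1 i
  · ext a
    simp only [Set.mem_setOf_eq, Set.mem_singleton_iff]
    constructor
    · intro h
      by_contra hne
      have ha : a = true := by cases a <;> simp_all
      subst ha
      exact h ⟨false, fun b => by cases b <;> simp [payoff, (h3 i).le, (h1 i).le],
        true, by simpa [payoff] using h1 i⟩
    · rintro rfl ⟨a', hle, b, hlt⟩
      cases a'
      · exact absurd hlt (lt_irrefl _)
      · exact absurd (hle true) (not_le.2 (by simpa [payoff] using h1 i))
end

section
/- Given a deviating player who withholds its share whenever it is supposed to send, its expected per-round utility when supposed to send equals (α²·u_top + (1-α)²·u_bot)/(α²+(1-α)²); honest play yields u_mid in those states; hence for all α below the threshold α* = the solution where these are equal (which exists in (0,1) since u_top > u_mid > u_bot), honest play is a strict best response in the sending subgame. -/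
/-! The withholding payoff is a weighted mean of `u_top` and `u_bot` with weights `α²` and
`(1-α)²`, so it lies below `u_mid` exactly when `α² (u_top - u_mid) < (1-α)² (u_mid - u_bot)`.
Taking square roots, with `a = √(u_mid - u_bot)` and `b = √(u_top - u_mid)`, this reads
`α b < (1-α) a`, a condition linear in `α` that holds precisely below `α* = a / (a + b)`. -/

lemma sq_add_one_sub_sq_pos (α : ℝ) : 0 < α ^ 2 + (1 - α) ^ 2 := by
  nlinarith [sq_nonneg (2 * α - 1)]

section WeightedMean

variable {w₁ w₂ x y m : ℝ}

lemma weightedMean_eq_iff (hw : 0 < w₁ + w₂) :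
    (w₁ * x + w₂ * y) / (w₁ + w₂) = m ↔ w₁ * (x - m) = w₂ * (m - y) := by
  rw [div_eq_iff hw.ne']
  constructor <;> intro h <;> linarith

lemma weightedMean_lt_iff (hw : 0 < w₁ + w₂) :
    (w₁ * x + w₂ * y) / (w₁ + w₂) < m ↔ w₁ * (x - m) < w₂ * (m - y) := by
  rw [div_lt_iff₀ hw]
  constructor <;> intro h <;> linarith

end WeightedMean

section Threshold

variable {a b : ℝ}

lemma div_add_mul_eq_one_sub_div_add_mul (hab : a + b ≠ 0) :
    a / (a + b) * b = (1 - a / (a + b)) * a := by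
  field_simp
  ring

lemma mul_lt_one_sub_mul_of_lt_div_add (hab : 0 < a + b) {α : ℝ} (hα : α < a / (a + b)) :
    α * b < (1 - α) * a := by
  have := (lt_div_iff₀ hab).mp hα
  linarith

end Threshold

/-- A deviator who withholds whenever supposed to send gets conditional
expected utility (α²·u_top + (1-α)²·u_bot)/(α²+(1-α)²) per round, while
honest play yields u_mid. Since u_top > u_mid > u_bot there is a threshold
α* ∈ (0,1) where the two are equal, and for all α below α* honest play is a
strict best response in the sending subgame. -/
theorem stmt17 (u_top u_mid u_bot : ℝ) (h1 : u_mid < u_top) (h2 : u_bot < u_mid) :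
    ∃ αs ∈ Set.Ioo (0 : ℝ) 1,
      (αs ^ 2 * u_top + (1 - αs) ^ 2 * u_bot) / (αs ^ 2 + (1 - αs) ^ 2)
        = u_mid ∧
      ∀ α ∈ Set.Ioo (0 : ℝ) αs,
        (α ^ 2 * u_top + (1 - α) ^ 2 * u_bot) / (α ^ 2 + (1 - α) ^ 2)
          < u_mid := by
  set a := √(u_mid - u_bot)
  set b := √(u_top - u_mid)
  have ha : 0 < a := Real.sqrt_pos.mpr (sub_pos.mpr h2)
  have hb : 0 < b := Real.sqrt_pos.mpr (sub_pos.mpr h1)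
  have ha2 : a ^ 2 = u_mid - u_bot := Real.sq_sqrt (sub_pos.mpr h2).le
  have hb2 : b ^ 2 = u_top - u_mid := Real.sq_sqrt (sub_pos.mpr h1).le
  have hab : 0 < a + b := add_pos ha hb
  refine ⟨a / (a + b), ⟨div_pos ha hab, (div_lt_one hab).mpr (by linarith)⟩, ?_, ?_⟩
  · rw [weightedMean_eq_iff (sq_add_one_sub_sq_pos _), ← ha2, ← hb2, ← mul_pow, ← mul_pow,
      div_add_mul_eq_one_sub_div_add_mul hab.ne']
  · rintro α ⟨hα, hαs⟩
    rw [weightedMean_lt_iff (sq_add_one_sub_sq_pos _), ← ha2, ← hb2, ← mul_pow, ← mul_pow]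
    exact pow_lt_pow_left₀ (mul_lt_one_sub_mul_of_lt_div_add hab hαs) (by positivity) two_ne_zero
end
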